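/- arXiv:2205.14211 — 3 statements merged into one kernel-verified Lean document; each statement's English description precedes it below -/
import Mathlib

section
/- (Lemma F.5, coarse bound on the value estimation error) On the event 𝓔₁ ∩ 𝓔₂, for all k ∈ {1,…,K}: ‖V* − v_k‖_∞ < 2H·min{1, γ^k + α^{k−1} + A_{γ,k−1}/A_∞ + 6H√(ι₁/M)} (with the convention 1/0 := ∞, so that A_{γ,k−1}/A_∞ is well-defined). -/
open MeasureTheory ProbabilityTheory Finset Real

noncomputable section

/-- The transition kernel `P` applied to a state-value function:
`(Pv)(x,a) = Σ_z P(z|x,a) v(z)`. -/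
def mdpP {S A : Type} [Fintype S] (P : S → A → S → ℝ) (v : S → ℝ) : S → A → ℝ :=
  fun x a => ∑ z, P x a z * v z

/-- A policy applied to a Q-function: `(poq)(x) = Σ_a po(a|x) q(x,a)`. -/
def polAct {S A : Type} [Fintype A] (po : S → A → ℝ) (q : S → A → ℝ) : S → ℝ :=
  fun x => ∑ a, po x a * q x a

/-- `P` is a transition kernel. -/
def IsKernel {S A : Type} [Fintype S] (P : S → A → S → ℝ) : Prop :=
  (∀ x a z, 0 ≤ P x a z) ∧ ∀ x a, ∑ z, P x a z = 1

/-- `po` is a (Markov) policy. -/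
def IsPolicy {S A : Type} [Fintype A] (po : S → A → ℝ) : Prop :=
  (∀ x a, 0 ≤ po x a) ∧ ∀ x, ∑ a, po x a = 1

/-- The deterministic policy induced by `d : S → A`. -/
def detPol {S A : Type} [DecidableEq A] (d : S → A) : S → A → ℝ :=
  fun x a => if a = d x then 1 else 0

/-- The Bellman operator `T^po q = r + γ P (po q)`. -/
def bellmanOp {S A : Type} [Fintype S] [Fintype A] (P : S → A → S → ℝ) (r : S → A → ℝ)
    (γ : ℝ) (po : S → A → ℝ) (qf : S → A → ℝ) : S → A → ℝ :=
  fun x a => r x a + γ * mdpP P (polAct po qf) x a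

/-- `P^po = Ppo` acting on Q-functions. -/
def Ppi {S A : Type} [Fintype S] [Fintype A] (P : S → A → S → ℝ) (po : S → A → ℝ)
    (qf : S → A → ℝ) : S → A → ℝ :=
  mdpP P (polAct po qf)

/-- `PprodN P po j n` is `P^{po_{j+n-1}} ⋯ P^{po_j}` (`n` factors, identity for `n = 0`);
this is `P_j^i` of the paper with `n = i + 1 - j` factors. -/
def PprodN {S A : Type} [Fintype S] [Fintype A] (P : S → A → S → ℝ)
    (po : ℕ → S → A → ℝ) (j : ℕ) : ℕ → (S → A → ℝ) → S → A → ℝ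
  | 0, qf => qf
  | n + 1, qf => Ppi P (po (j + n)) (PprodN P po j n qf)

/-- The conditional standard deviation `σ(v)(x,a) = √(P(v²)(x,a) − (Pv)(x,a)²)`. -/
def sigmaP {S A : Type} [Fintype S] (P : S → A → S → ℝ) (v : S → ℝ) : S → A → ℝ :=
  fun x a => Real.sqrt (mdpP P (fun z => v z ^ 2) x a - (mdpP P v x a) ^ 2)

/-- `𝒩^po = Σ_{t=0}^∞ (γ po P)^t` acting on state-value functions. -/
def Npol {S A : Type} [Fintype S] [Fintype A] (P : S → A → S → ℝ) (γ : ℝ)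
    (po : S → A → ℝ) (vf : S → ℝ) : S → ℝ :=
  fun x => ∑' t : ℕ, ((fun uf : S → ℝ => fun z => γ * polAct po (mdpP P uf) z)^[t] vf) x

/-!
Write `Λ_k = ∑_{j<k} α^j`. Unrolling the recursion gives `s_k = Λ_k r + γ P w_{k-1} + E_k`,
and by policy improvement `V* = max_a Q*` with `Q* = r + γ P V*`. As taking maxima over actions
is 1-Lipschitz for the sup norm,
`‖Λ_k V* - w_k‖ ≤ γ (‖Λ_{k-1} V* - w_{k-1}‖ + α^{k-1} H) + ‖E_k‖` and
`‖w_k - w_{k-1}‖ ≤ γ ‖w_{k-1} - w_{k-2}‖ + α^{k-1} + ‖E_k - E_{k-1}‖`. Both linear recursions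
solve to `A_{γ,·}` plus geometric sums of the noise. The error splits as
`V* - v_k = (1 - α) (Λ_{k-1} V* - w_{k-1}) + α^{k-1} V* - (w_k - w_{k-1})`, and
`E_k - E_{k-1} = ε_k - (1 - α) E_{k-1}`: the factor `1 - α` absorbs the `√A_∞` of `𝓔₁`, so all
noise terms are of order `H √(ι₁ / M)`. The bound `2H` comes from `‖V*‖ ≤ H` and
`‖v_k‖ ≤ (1 - γ^k) H`, except for `γ = 0`, where `v_k = V*` exactly.
-/

lemma abs_apply_le_norm {S : Type} [Fintype S] (f : S → ℝ) (x : S) : |f x| ≤ ‖f‖ :=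
  norm_le_pi_norm f x

section Kernel

variable {S A : Type} [Fintype S]

lemma mdpP_sub (P : S → A → S → ℝ) (u u' : S → ℝ) :
    mdpP P (u - u') = mdpP P u - mdpP P u' := by
  ext x a
  simp only [mdpP, Pi.sub_apply, mul_sub, sum_sub_distrib]

lemma mdpP_smul (P : S → A → S → ℝ) (c : ℝ) (u : S → ℝ) :
    mdpP P (c • u) = c • mdpP P u := by
  ext x a
  simp only [mdpP, Pi.smul_apply, smul_eq_mul, mul_sum]
  exact sum_congr rfl fun _ _ => by ring

lemma mdpP_mono {P : S → A → S → ℝ} (hP : IsKernel P) {u u' : S → ℝ} (h : u ≤ u') :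
    mdpP P u ≤ mdpP P u' :=
  fun x a => sum_le_sum fun z _ => mul_le_mul_of_nonneg_left (h z) (hP.1 x a z)

lemma mdpP_const {P : S → A → S → ℝ} (hP : IsKernel P) (c : ℝ) :
    mdpP P (fun _ => c) = fun _ _ => c := by
  ext x a
  rw [mdpP, ← sum_mul, hP.2 x a, one_mul]

lemma abs_mdpP_le_norm {P : S → A → S → ℝ} (hP : IsKernel P) (u : S → ℝ) (x : S) (a : A) :
    |mdpP P u x a| ≤ ‖u‖ := by
  have hle := abs_apply_le_norm u
  refine abs_le.2 ⟨?_, ?_⟩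
  · simpa [mdpP_const hP] using
      mdpP_mono hP (fun z => (neg_le_of_abs_le (hle z) : -‖u‖ ≤ u z)) x a
  · simpa [mdpP_const hP] using
      mdpP_mono hP (fun z => (le_of_abs_le (hle z) : u z ≤ ‖u‖)) x a

end Kernel

lemma abs_le_norm_apply_apply {S A : Type} [Fintype S] [Fintype A] (f : S → A → ℝ)
    (x : S) (a : A) : |f x a| ≤ ‖f‖ :=
  (norm_le_pi_norm (f x) a).trans (norm_le_pi_norm f x)

section Policy

variable {S A : Type} [Fintype A] {po : S → A → ℝ}

lemma polAct_le_ciSup (hpo : IsPolicy po) (q : S → A → ℝ) (x : S) :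
    polAct po q x ≤ ⨆ a, q x a :=
  calc polAct po q x ≤ ∑ a, po x a * ⨆ b, q x b :=
        sum_le_sum fun a _ =>
          mul_le_mul_of_nonneg_left (le_ciSup (Finite.bddAbove_range _) a) (hpo.1 x a)
    _ = ⨆ b, q x b := by rw [← sum_mul, hpo.2 x, one_mul]

lemma abs_polAct_le (hpo : IsPolicy po) {q : S → A → ℝ} {x : S} {C : ℝ}
    (hq : ∀ a, |q x a| ≤ C) : |polAct po q x| ≤ C :=
  calc |polAct po q x| ≤ ∑ a, po x a * |q x a| := by
        refine (abs_sum_le_sum_abs _ _).trans_eq (sum_congr rfl fun a _ => ?_)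
        rw [abs_mul, abs_of_nonneg (hpo.1 x a)]
    _ ≤ ∑ a, po x a * C := sum_le_sum fun a _ => mul_le_mul_of_nonneg_left (hq a) (hpo.1 x a)
    _ = C := by rw [← sum_mul, hpo.2 x, one_mul]

end Policy

lemma norm_le_of_forall_abs_le {S A : Type} [Fintype S] [Fintype A] {f : S → A → ℝ} {C : ℝ}
    (hC : 0 ≤ C) (h : ∀ x a, |f x a| ≤ C) : ‖f‖ ≤ C :=
  (pi_norm_le_iff_of_nonneg hC).2 fun x => (pi_norm_le_iff_of_nonneg hC).2 fun a => h x a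

lemma abs_ciSup_sub_ciSup_le {ι : Type*} [Finite ι] [Nonempty ι] {f g : ι → ℝ} {C : ℝ}
    (h : ∀ i, |f i - g i| ≤ C) : |(⨆ i, f i) - ⨆ i, g i| ≤ C := by
  have key : ∀ f g : ι → ℝ, (∀ i, |f i - g i| ≤ C) → (⨆ i, f i) ≤ (⨆ i, g i) + C :=
    fun f g h => ciSup_le fun i => by
      linarith [le_of_abs_le (h i), le_ciSup (Finite.bddAbove_range g) i]
  have h' : ∀ i, |g i - f i| ≤ C := fun i => abs_sub_comm (f i) (g i) ▸ h i
  exact abs_sub_le_iff.2 ⟨by linarith [key f g h], by linarith [key g f h']⟩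

lemma le_of_succ_le_mul_add {γ : ℝ} (hγ : 0 ≤ γ) {b B c : ℕ → ℝ} {n : ℕ} (h0 : b 0 ≤ B 0)
    (hb : ∀ k < n, b (k + 1) ≤ γ * b k + c k) (hB : ∀ k < n, γ * B k + c k ≤ B (k + 1)) :
    b n ≤ B n := by
  induction n with
  | zero => exact h0
  | succ n ih =>
    have hbn := ih (fun k hk => hb k (by omega)) (fun k hk => hB k (by omega))
    linarith [hb n n.lt_succ_self, hB n n.lt_succ_self, mul_le_mul_of_nonneg_left hbn hγ]

lemma abs_div_mul_sum_le {S : Type} [Fintype S] {γ : ℝ} (hγ : 0 ≤ γ) (M : ℕ) (u : S → ℝ)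
    (ys : ℕ → S) : |γ / M * ∑ m ∈ range M, u (ys m)| ≤ γ * ‖u‖ := by
  rcases Nat.eq_zero_or_pos M with rfl | hM
  · simpa using mul_nonneg hγ (norm_nonneg u)
  have hsum : |∑ m ∈ range M, u (ys m)| ≤ M * ‖u‖ :=
    (abs_sum_le_sum_abs _ _).trans <| by
      simpa using sum_le_sum fun m (_ : m ∈ range M) => abs_apply_le_norm u (ys m)
  rw [abs_mul, abs_of_nonneg (by positivity)]
  calc γ / M * |∑ m ∈ range M, u (ys m)| ≤ γ / M * (M * ‖u‖) :=
        mul_le_mul_of_nonneg_left hsum (by positivity)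
    _ = γ * ‖u‖ := by field_simp

lemma sum_range_succ_pow_sub_mul (α : ℝ) (e : ℕ → ℝ) (k : ℕ) :
    ∑ j ∈ range (k + 1), α ^ (k - j) * e j = e k + α * ∑ j ∈ range k, α ^ (k - 1 - j) * e j := by
  rw [sum_range_succ, Nat.sub_self, pow_zero, one_mul, add_comm, mul_sum]
  congr 1
  exact sum_congr rfl fun j hj => by
    have := mem_range.1 hj
    rw [← mul_assoc, ← pow_succ']
    congr 2
    omega

lemma mul_sqrt_one_div_mul_div_le {β : ℝ} (hβ0 : 0 ≤ β) (hβ1 : β ≤ 1) (t M : ℝ) :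
    β * √(1 / β * t / M) ≤ √(t / M) := by
  rw [mul_div_assoc, Real.sqrt_mul (by positivity), ← mul_assoc, one_div, Real.sqrt_inv,
    ← div_eq_mul_inv, Real.div_sqrt]
  exact mul_le_of_le_one_left (Real.sqrt_nonneg _) (Real.sqrt_le_one.2 hβ1)

/-- The paper's `A_{γ,n}`. -/
def mixedGeomSum (γ α : ℝ) (n : ℕ) : ℝ := ∑ i ∈ range n, γ ^ (n - i) * α ^ i

lemma mixedGeomSum_succ (γ α : ℝ) (n : ℕ) :
    mixedGeomSum γ α (n + 1) = γ * (mixedGeomSum γ α n + α ^ n) := by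
  rw [mixedGeomSum, sum_range_succ, mixedGeomSum, mul_add, mul_sum, Nat.add_sub_cancel_left,
    pow_one]
  congr 1
  exact sum_congr rfl fun i hi => by
    rw [Nat.sub_add_comm (mem_range.1 hi).le, pow_succ]; ring

lemma one_sub_mul_mixedGeomSum_add_pow (γ α : ℝ) (n : ℕ) :
    (1 - γ) * (mixedGeomSum γ α n + α ^ n)
      = (1 - α) * mixedGeomSum γ α n + α ^ n - γ ^ (n + 1) := by
  induction n with
  | zero => simp [mixedGeomSum]
  | succ n ih =>
    rw [mixedGeomSum_succ]
    linear_combination γ * ih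

lemma geom_sum_le_one_div {γ : ℝ} (hγ0 : 0 ≤ γ) (hγ1 : γ < 1) (m : ℕ) :
    ∑ j ∈ range m, γ ^ j ≤ 1 / (1 - γ) := by
  simpa [← range_eq_Ico] using geom_sum_Ico_le_of_lt_one (m := 0) (n := m) hγ0 hγ1

lemma mixedGeomSum_add_pow_le {γ : ℝ} (hγ0 : 0 ≤ γ) (hγ1 : γ < 1) (α : ℝ) (n : ℕ) :
    mixedGeomSum γ α n + α ^ n ≤ 1 / (1 - γ) * ((1 - α) * mixedGeomSum γ α n + α ^ n) := by
  rw [one_div_mul_eq_div, le_div_iff₀ (by linarith), mul_comm, one_sub_mul_mixedGeomSum_add_pow]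
  linarith [pow_nonneg hγ0 (n + 1)]

lemma mixedGeomSum_zero_left (α : ℝ) (n : ℕ) : mixedGeomSum 0 α n = 0 :=
  sum_eq_zero fun i hi => by
    rw [zero_pow (Nat.sub_ne_zero_of_lt (mem_range.1 hi)), zero_mul]

section DetPol

variable {S A : Type} [Fintype A] [DecidableEq A]

lemma isPolicy_detPol (d : S → A) : IsPolicy (detPol d) :=
  ⟨fun x a => by unfold detPol; split_ifs <;> norm_num, fun x => by simp [detPol]⟩

lemma polAct_detPol (d : S → A) (q : S → A → ℝ) (x : S) :
    polAct (detPol d) q x = q x (d x) := by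
  simp [polAct, detPol]

end DetPol

section MDP

variable {S A : Type} [Fintype S] [Fintype A] {P : S → A → S → ℝ} {r : S → A → ℝ} {γ : ℝ}

lemma norm_polAct_le_of_bellmanOp_eq (hP : IsKernel P) (hr : ∀ x a, |r x a| ≤ 1)
    (hγ0 : 0 ≤ γ) (hγ1 : γ < 1) {po : S → A → ℝ} (hpo : IsPolicy po) {q : S → A → ℝ}
    (hq : bellmanOp P r γ po q = q) : ‖polAct po q‖ ≤ 1 / (1 - γ) := by
  set V := polAct po q
  have hV : ‖V‖ ≤ 1 + γ * ‖V‖ := by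
    refine (pi_norm_le_iff_of_nonneg (by positivity)).2 fun x => abs_polAct_le hpo fun a => ?_
    rw [← hq]
    calc |r x a + γ * mdpP P V x a| ≤ |r x a| + γ * |mdpP P V x a| := by
          simpa [abs_mul, abs_of_nonneg hγ0] using abs_add_le (r x a) (γ * mdpP P V x a)
      _ ≤ 1 + γ * ‖V‖ :=
          add_le_add (hr x a) (mul_le_mul_of_nonneg_left (abs_mdpP_le_norm hP V x a) hγ0)
  rw [le_div_iff₀ (by linarith)]
  linarith

lemma le_of_bellmanOp_eq_of_greedy [DecidableEq A] (hP : IsKernel P) (hγ0 : 0 ≤ γ)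
    (hγ1 : γ < 1) {po : S → A → ℝ} (hpo : IsPolicy po) {q qd : S → A → ℝ} {d : S → A}
    (hq : bellmanOp P r γ po q = q) (hqd : bellmanOp P r γ (detPol d) qd = qd)
    (hd : ∀ x, q x (d x) = ⨆ a, q x a) : q ≤ qd := by
  intro x a
  have : Nonempty (S × A) := ⟨(x, a)⟩
  obtain ⟨⟨x₀, a₀⟩, hmin⟩ := Finite.exists_min fun p : S × A => qd p.1 p.2 - q p.1 p.2
  have hgap : (fun _ => qd x₀ a₀ - q x₀ a₀) ≤ polAct (detPol d) qd - polAct po q := fun z => by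
    have := hmin (z, d z)
    have := polAct_le_ciSup hpo q z
    simp only [Pi.sub_apply, polAct_detPol]
    linarith [hd z]
  -- the smallest gap is at least `γ` times itself, hence nonnegative
  have hm : qd x₀ a₀ - q x₀ a₀ = γ * mdpP P (polAct (detPol d) qd - polAct po q) x₀ a₀ := by
    conv_lhs => rw [← hq, ← hqd]
    simp only [bellmanOp, mdpP_sub, Pi.sub_apply]
    ring
  have hPgap := mdpP_mono hP hgap x₀ a₀
  rw [mdpP_const hP] at hPgap
  have := hmin (x, a)
  nlinarith [mul_le_mul_of_nonneg_left hPgap hγ0]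

lemma polAct_eq_ciSup_of_optimal [Nonempty A] [DecidableEq A] (hP : IsKernel P)
    (hγ0 : 0 ≤ γ) (hγ1 : γ < 1) {Qpol : (S → A → ℝ) → S → A → ℝ}
    (hQ : ∀ po, IsPolicy po → bellmanOp P r γ po (Qpol po) = Qpol po)
    {pstar : S → A → ℝ} (hpstar : IsPolicy pstar)
    (hopt : ∀ po, IsPolicy po → ∀ x, polAct po (Qpol po) x ≤ polAct pstar (Qpol pstar) x)
    (x : S) : polAct pstar (Qpol pstar) x = ⨆ a, Qpol pstar x a := by
  choose d hd using fun x => exists_eq_ciSup_of_finite (f := Qpol pstar x)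
  have hgreedy := le_of_bellmanOp_eq_of_greedy hP hγ0 hγ1 hpstar (hQ pstar hpstar)
    (hQ _ (isPolicy_detPol d)) hd
  refine le_antisymm (polAct_le_ciSup hpstar _ x) ?_
  calc ⨆ a, Qpol pstar x a = Qpol pstar x (d x) := (hd x).symm
    _ ≤ Qpol (detPol d) x (d x) := hgreedy x (d x)
    _ = polAct (detPol d) (Qpol (detPol d)) x := (polAct_detPol d _ x).symm
    _ ≤ polAct pstar (Qpol pstar) x := hopt _ (isPolicy_detPol d) x

end MDP

lemma w_eq_ciSup {S A : Type} [Nonempty A] {w : ℕ → S → ℝ} {sq : ℕ → S → A → ℝ}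
    (hs0 : ∀ x a, sq 0 x a = 0) (hw0 : ∀ x, w 0 x = 0)
    (hwk : ∀ k x, w (k + 1) x = ⨆ a, sq (k + 1) x a) (k : ℕ) (x : S) :
    w k x = ⨆ a, sq k x a := by
  cases k with
  | zero => simp [hs0, hw0]
  | succ k => exact hwk k x

lemma Ef_succ {S A : Type} {α : ℝ} {εf Ef : ℕ → S → A → ℝ}
    (hEf : ∀ k x a, Ef k x a = ∑ j ∈ range k, α ^ (k - 1 - j) * εf (j + 1) x a)
    (k : ℕ) (x : S) (a : A) : Ef (k + 1) x a = εf (k + 1) x a + α * Ef k x a := by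
  rw [hEf, hEf, Nat.add_sub_cancel, sum_range_succ_pow_sub_mul α (fun j => εf (j + 1) x a)]

section MDVI

variable {S A : Type} [Fintype S] {P : S → A → S → ℝ} {r : S → A → ℝ} {α γ : ℝ}
  {w v : ℕ → S → ℝ} {sq qv εf Ef : ℕ → S → A → ℝ}

-- For `k = 0` both sides vanish: `w (0 - 1)` is `w 0 = 0`.
lemma sq_eq_geomSum_mul_add (hs0 : ∀ x a, sq 0 x a = 0) (hw0 : ∀ x, w 0 x = 0)
    (hv : ∀ k x, v k x = w k x - α * w (k - 1) x)
    (hq : ∀ k x a, qv (k + 1) x a = r x a + γ * mdpP P (v k) x a + εf (k + 1) x a)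
    (hsq : ∀ k x a, sq (k + 1) x a = qv (k + 1) x a + α * sq k x a)
    (hE0 : ∀ x a, Ef 0 x a = 0) (hE : ∀ k x a, Ef (k + 1) x a = εf (k + 1) x a + α * Ef k x a)
    (k : ℕ) (x : S) (a : A) :
    sq k x a = (∑ j ∈ range k, α ^ j) * r x a + γ * mdpP P (w (k - 1)) x a + Ef k x a := by
  induction k generalizing x a with
  | zero => simp [hs0, hE0, mdpP, hw0]
  | succ k ih =>
    have hvk : v k = w k - α • w (k - 1) := funext (hv k)
    rw [hsq, hq, ih, hE, hvk, mdpP_sub, mdpP_smul, geom_sum_succ, Nat.add_sub_cancel]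
    simp only [Pi.sub_apply, Pi.smul_apply, smul_eq_mul]
    ring

lemma abs_sub_v_succ_le_norms (hα0 : 0 ≤ α) (hα1 : α ≤ 1)
    (hv : ∀ k x, v k x = w k x - α * w (k - 1) x) (V : S → ℝ) (n : ℕ) (x : S) :
    |V x - v (n + 1) x| ≤ (1 - α) * ‖(∑ j ∈ range n, α ^ j) • V - w n‖ + α ^ n * ‖V‖
      + ‖w (n + 1) - w n‖ := by
  have hdecomp : V x - v (n + 1) x = (1 - α) * ((∑ j ∈ range n, α ^ j) • V - w n) x + α ^ n * V x
      - (w (n + 1) - w n) x := by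
    have := mul_neg_geom_sum α n
    simp only [hv, Nat.add_sub_cancel, Pi.sub_apply, Pi.smul_apply, smul_eq_mul]
    linear_combination (-V x) * this
  rw [hdecomp]
  refine (abs_sub _ _).trans (add_le_add ((abs_add_le _ _).trans (add_le_add ?_ ?_))
    (abs_apply_le_norm _ x))
  · rw [abs_mul, abs_of_nonneg (by linarith)]
    exact mul_le_mul_of_nonneg_left (abs_apply_le_norm _ x) (by linarith)
  · rw [abs_mul, abs_of_nonneg (by positivity)]
    exact mul_le_mul_of_nonneg_left (abs_apply_le_norm _ x) (by positivity)

variable [Fintype A]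

lemma norm_Ef_succ_sub_le (hα1 : α ≤ 1)
    (hE : ∀ k x a, Ef (k + 1) x a = εf (k + 1) x a + α * Ef k x a)
    (j : ℕ) : ‖Ef (j + 1) - Ef j‖ ≤ ‖εf (j + 1)‖ + (1 - α) * ‖Ef j‖ := by
  have : Ef (j + 1) - Ef j = εf (j + 1) - (1 - α) • Ef j := by
    ext x a
    simp only [Pi.sub_apply, Pi.smul_apply, smul_eq_mul, hE]
    ring
  rw [this]
  exact (norm_sub_le _ _).trans_eq (by rw [norm_smul, Real.norm_of_nonneg (by linarith)])

variable [Nonempty A]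

lemma norm_geomSum_smul_sub_w_succ_le (hP : IsKernel P) (hα0 : 0 ≤ α) (hγ0 : 0 ≤ γ)
    {V : S → ℝ} {Q : S → A → ℝ} (hV : ∀ x, V x = ⨆ a, Q x a)
    (hQ : ∀ x a, Q x a = r x a + γ * mdpP P V x a)
    (hs : ∀ k x a, sq k x a = (∑ j ∈ range k, α ^ j) * r x a + γ * mdpP P (w (k - 1)) x a
      + Ef k x a)
    (hw : ∀ k x, w k x = ⨆ a, sq k x a) (k : ℕ) :
    ‖(∑ j ∈ range (k + 1), α ^ j) • V - w (k + 1)‖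
      ≤ γ * (‖(∑ j ∈ range k, α ^ j) • V - w k‖ + α ^ k * ‖V‖) + ‖Ef (k + 1)‖ := by
  set Λ := ∑ j ∈ range (k + 1), α ^ j
  have hΛ : 0 ≤ Λ := sum_nonneg fun j _ => pow_nonneg hα0 j
  have hshift : ‖Λ • V - w k‖ ≤ ‖(∑ j ∈ range k, α ^ j) • V - w k‖ + α ^ k * ‖V‖ := by
    have : Λ • V - w k = ((∑ j ∈ range k, α ^ j) • V - w k) + α ^ k • V := by
      rw [show Λ = _ + α ^ k from sum_range_succ _ _, add_smul]; abel
    rw [this]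
    exact (norm_add_le _ _).trans_eq (by rw [norm_smul, Real.norm_of_nonneg (pow_nonneg hα0 k)])
  refine (pi_norm_le_iff_of_nonneg (by positivity)).2 fun x => ?_
  rw [Real.norm_eq_abs, Pi.sub_apply, Pi.smul_apply, smul_eq_mul, hV, Real.mul_iSup_of_nonneg hΛ,
    hw]
  refine abs_ciSup_sub_ciSup_le fun a => ?_
  have hdiff : Λ * Q x a - sq (k + 1) x a = γ * mdpP P (Λ • V - w k) x a - Ef (k + 1) x a := by
    rw [hQ, hs, mdpP_sub, mdpP_smul, Nat.add_sub_cancel]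
    simp only [Pi.sub_apply, Pi.smul_apply, smul_eq_mul]
    ring
  rw [hdiff]
  calc |γ * mdpP P (Λ • V - w k) x a - Ef (k + 1) x a|
      ≤ γ * |mdpP P (Λ • V - w k) x a| + |Ef (k + 1) x a| :=
        (abs_sub _ _).trans_eq (by rw [abs_mul, abs_of_nonneg hγ0])
    _ ≤ γ * (‖(∑ j ∈ range k, α ^ j) • V - w k‖ + α ^ k * ‖V‖) + ‖Ef (k + 1)‖ :=
        add_le_add (mul_le_mul_of_nonneg_left ((abs_mdpP_le_norm hP _ x a).trans hshift) hγ0)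
          (abs_le_norm_apply_apply _ x a)

lemma norm_w_succ_sub_le (hP : IsKernel P) (hr : ∀ x a, |r x a| ≤ 1) (hα0 : 0 ≤ α)
    (hγ0 : 0 ≤ γ)
    (hs : ∀ k x a, sq k x a = (∑ j ∈ range k, α ^ j) * r x a + γ * mdpP P (w (k - 1)) x a
      + Ef k x a)
    (hw : ∀ k x, w k x = ⨆ a, sq k x a) (k : ℕ) :
    ‖w (k + 1) - w k‖ ≤ γ * ‖w k - w (k - 1)‖ + α ^ k + ‖Ef (k + 1) - Ef k‖ := by
  refine (pi_norm_le_iff_of_nonneg (by positivity)).2 fun x => ?_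
  rw [Real.norm_eq_abs, Pi.sub_apply, hw, hw]
  refine abs_ciSup_sub_ciSup_le fun a => ?_
  have hdiff : sq (k + 1) x a - sq k x a = α ^ k * r x a
      + γ * mdpP P (w k - w (k - 1)) x a + (Ef (k + 1) - Ef k) x a := by
    rw [hs, hs k, mdpP_sub, sum_range_succ, Nat.add_sub_cancel]
    simp only [Pi.sub_apply]
    ring
  have hαr : |α ^ k * r x a| ≤ α ^ k := by
    rw [abs_mul, abs_of_nonneg (pow_nonneg hα0 k)]
    exact mul_le_of_le_one_right (pow_nonneg hα0 k) (hr x a)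
  rw [hdiff]
  calc |α ^ k * r x a + γ * mdpP P (w k - w (k - 1)) x a + (Ef (k + 1) - Ef k) x a|
      ≤ α ^ k + γ * |mdpP P (w k - w (k - 1)) x a| + |(Ef (k + 1) - Ef k) x a| := by
        have := abs_add_three (α ^ k * r x a) (γ * mdpP P (w k - w (k - 1)) x a)
          ((Ef (k + 1) - Ef k) x a)
        rw [abs_mul γ, abs_of_nonneg hγ0] at this
        linarith
    _ ≤ γ * ‖w k - w (k - 1)‖ + α ^ k + ‖Ef (k + 1) - Ef k‖ := by
        have := mul_le_mul_of_nonneg_left (abs_mdpP_le_norm hP (w k - w (k - 1)) x a) hγ0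
        have := abs_le_norm_apply_apply (Ef (k + 1) - Ef k) x a
        linarith

lemma norm_v_succ_le (hr : ∀ x a, |r x a| ≤ 1) (hα0 : 0 ≤ α) (hγ0 : 0 ≤ γ)
    {M : ℕ} {y : ℕ → ℕ → S → A → S} (hv : ∀ k x, v k x = w k x - α * w (k - 1) x)
    (hqv : ∀ k x a, qv (k + 1) x a
      = r x a + (γ / (M : ℝ)) * ∑ m ∈ range M, v k (y k m x a))
    (hsq : ∀ k x a, sq (k + 1) x a = qv (k + 1) x a + α * sq k x a)
    (hw : ∀ k x, w k x = ⨆ a, sq k x a) (k : ℕ) :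
    ‖v (k + 1)‖ ≤ γ * ‖v k‖ + 1 := by
  refine (pi_norm_le_iff_of_nonneg (by positivity)).2 fun x => ?_
  rw [Real.norm_eq_abs, hv, Nat.add_sub_cancel, hw, hw, Real.mul_iSup_of_nonneg hα0]
  refine abs_ciSup_sub_ciSup_le fun a => ?_
  rw [hsq, add_sub_cancel_right, hqv]
  calc |r x a + γ / M * ∑ m ∈ range M, v k (y k m x a)|
      ≤ |r x a| + |γ / M * ∑ m ∈ range M, v k (y k m x a)| := abs_add_le _ _
    _ ≤ γ * ‖v k‖ + 1 := by
        linarith [hr x a, abs_div_mul_sum_le hγ0 M (v k) fun m => y k m x a]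

lemma norm_geomSum_smul_sub_w_le (hP : IsKernel P) (hα0 : 0 ≤ α) (hγ0 : 0 ≤ γ)
    {V : S → ℝ} {Q : S → A → ℝ} (hV : ∀ x, V x = ⨆ a, Q x a)
    (hQ : ∀ x a, Q x a = r x a + γ * mdpP P V x a)
    (hs : ∀ k x a, sq k x a = (∑ j ∈ range k, α ^ j) * r x a + γ * mdpP P (w (k - 1)) x a
      + Ef k x a)
    (hw : ∀ k x, w k x = ⨆ a, sq k x a) (hw0 : ∀ x, w 0 x = 0) {n : ℕ} {cE : ℝ}
    (hE : ∀ j < n, ‖Ef (j + 1)‖ ≤ cE) :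
    ‖(∑ j ∈ range n, α ^ j) • V - w n‖ ≤ ‖V‖ * mixedGeomSum γ α n + cE * ∑ j ∈ range n, γ ^ j := by
  refine le_of_succ_le_mul_add (b := fun k => ‖(∑ j ∈ range k, α ^ j) • V - w k‖)
    (B := fun k => ‖V‖ * mixedGeomSum γ α k + cE * ∑ j ∈ range k, γ ^ j)
    (c := fun k => γ * α ^ k * ‖V‖ + cE) hγ0 ?_ (fun k hk => ?_) (fun k _ => le_of_eq ?_)
  · have hw0' : w 0 = 0 := funext hw0
    simp [mixedGeomSum, hw0']
  · linarith [norm_geomSum_smul_sub_w_succ_le hP hα0 hγ0 hV hQ hs hw k, hE k hk]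
  · rw [mixedGeomSum_succ, geom_sum_succ]; ring

lemma norm_w_succ_sub_w_le (hP : IsKernel P) (hr : ∀ x a, |r x a| ≤ 1) (hα0 : 0 ≤ α)
    (hγ0 : 0 ≤ γ)
    (hs : ∀ k x a, sq k x a = (∑ j ∈ range k, α ^ j) * r x a + γ * mdpP P (w (k - 1)) x a
      + Ef k x a)
    (hw : ∀ k x, w k x = ⨆ a, sq k x a) {n : ℕ} {cD : ℝ}
    (hE : ∀ j ≤ n, ‖Ef (j + 1) - Ef j‖ ≤ cD) :
    ‖w (n + 1) - w n‖ ≤ mixedGeomSum γ α n + α ^ n + cD * ∑ j ∈ range (n + 1), γ ^ j := by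
  refine le_of_succ_le_mul_add (b := fun k => ‖w (k + 1) - w k‖)
    (B := fun k => mixedGeomSum γ α k + α ^ k + cD * ∑ j ∈ range (k + 1), γ ^ j)
    (c := fun k => α ^ (k + 1) + cD)
    hγ0 ?_ (fun k hk => ?_) (fun k _ => le_of_eq ?_)
  · simpa [mixedGeomSum] using
      (norm_w_succ_sub_le hP hr hα0 hγ0 hs hw 0).trans (by simpa using hE 0 (Nat.zero_le n))
  · have hstep := norm_w_succ_sub_le hP hr hα0 hγ0 hs hw (k + 1)
    rw [Nat.add_sub_cancel] at hstep
    linarith [hE (k + 1) hk]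
  · rw [mixedGeomSum_succ, geom_sum_succ (n := k + 1)]; ring

lemma norm_v_le (hr : ∀ x a, |r x a| ≤ 1) (hα0 : 0 ≤ α) (hγ0 : 0 ≤ γ)
    {M : ℕ} {y : ℕ → ℕ → S → A → S} (hw0 : ∀ x, w 0 x = 0)
    (hv : ∀ k x, v k x = w k x - α * w (k - 1) x)
    (hqv : ∀ k x a, qv (k + 1) x a
      = r x a + (γ / (M : ℝ)) * ∑ m ∈ range M, v k (y k m x a))
    (hsq : ∀ k x a, sq (k + 1) x a = qv (k + 1) x a + α * sq k x a)
    (hw : ∀ k x, w k x = ⨆ a, sq k x a) (n : ℕ) :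
    ‖v n‖ ≤ ∑ j ∈ range n, γ ^ j := by
  refine le_of_succ_le_mul_add (b := fun k => ‖v k‖) (B := fun k => ∑ j ∈ range k, γ ^ j)
    (c := fun _ => 1) hγ0 ?_
    (fun k _ => norm_v_succ_le hr hα0 hγ0 hv hqv hsq hw k) (fun k _ => geom_sum_succ.ge)
  have hv0 : v 0 = 0 := funext fun x => by simp [hv, hw0]
  simp [hv0]

lemma abs_sub_v_succ_le (hP : IsKernel P) (hr : ∀ x a, |r x a| ≤ 1) (hα0 : 0 ≤ α)
    (hα1 : α ≤ 1) (hγ0 : 0 ≤ γ) (hγ1 : γ < 1) {V : S → ℝ} {Q : S → A → ℝ}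
    (hV : ∀ x, V x = ⨆ a, Q x a) (hQ : ∀ x a, Q x a = r x a + γ * mdpP P V x a)
    (hs : ∀ k x a, sq k x a = (∑ j ∈ range k, α ^ j) * r x a + γ * mdpP P (w (k - 1)) x a
      + Ef k x a)
    (hw : ∀ k x, w k x = ⨆ a, sq k x a) (hw0 : ∀ x, w 0 x = 0)
    (hv : ∀ k x, v k x = w k x - α * w (k - 1) x)
    (hE : ∀ k x a, Ef (k + 1) x a = εf (k + 1) x a + α * Ef k x a)
    {H : ℝ} (hH : H = 1 / (1 - γ)) (hVH : ‖V‖ ≤ H) {n : ℕ} {cε cE : ℝ}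
    (hεb : ∀ j ≤ n, ‖εf (j + 1)‖ ≤ cε) (hEb : ∀ j ≤ n, ‖Ef j‖ ≤ cE) (x : S) :
    |V x - v (n + 1) x|
      ≤ 2 * H * ((1 - α) * mixedGeomSum γ α n + α ^ n) + (2 * (1 - α) * cE + cε) * H := by
  have hcE : 0 ≤ cE := (norm_nonneg _).trans (hEb 0 n.zero_le)
  have hcε : 0 ≤ cε := (norm_nonneg _).trans (hεb 0 n.zero_le)
  have hA : 0 ≤ mixedGeomSum γ α n := by unfold mixedGeomSum; positivity
  have hG : ∀ m, ∑ j ∈ range m, γ ^ j ≤ H := hH ▸ geom_sum_le_one_div hγ0 hγ1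
  have hd := norm_geomSum_smul_sub_w_le hP hα0 hγ0 hV hQ hs hw hw0 (n := n)
    fun j hj => hEb (j + 1) hj
  have hΔ := norm_w_succ_sub_w_le hP hr hα0 hγ0 hs hw (n := n) (cD := cε + (1 - α) * cE)
    fun j hj => (norm_Ef_succ_sub_le hα1 hE j).trans
      (add_le_add (hεb j hj) (mul_le_mul_of_nonneg_left (hEb j hj) (by linarith)))
  have hAα := hH ▸ mixedGeomSum_add_pow_le hγ0 hγ1 α n
  have habs := abs_sub_v_succ_le_norms hα0 hα1 hv V n x
  have h1 : (1 - α) * ‖(∑ j ∈ range n, α ^ j) • V - w n‖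
      ≤ (1 - α) * (H * mixedGeomSum γ α n + cE * H) := by
    gcongr
    exact hd.trans (by gcongr; exact hG n)
  have h2 : α ^ n * ‖V‖ ≤ α ^ n * H := by gcongr
  have h3 : (cε + (1 - α) * cE) * ∑ j ∈ range (n + 1), γ ^ j ≤ (cε + (1 - α) * cE) * H := by
    gcongr
    exact hG (n + 1)
  linarith

lemma abs_sub_v_succ_lt_two_mul (hP : IsKernel P) (hr : ∀ x a, |r x a| ≤ 1) (hα0 : 0 ≤ α)
    (hγ0 : 0 ≤ γ) (hγ1 : γ < 1) {V : S → ℝ} {Q : S → A → ℝ}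
    (hV : ∀ x, V x = ⨆ a, Q x a) (hQ : ∀ x a, Q x a = r x a + γ * mdpP P V x a)
    {M : ℕ} {y : ℕ → ℕ → S → A → S}
    (hs : ∀ k x a, sq k x a = (∑ j ∈ range k, α ^ j) * r x a + γ * mdpP P (w (k - 1)) x a
      + Ef k x a)
    (hw : ∀ k x, w k x = ⨆ a, sq k x a) (hw0 : ∀ x, w 0 x = 0)
    (hv : ∀ k x, v k x = w k x - α * w (k - 1) x)
    (hqv : ∀ k x a, qv (k + 1) x a
      = r x a + (γ / (M : ℝ)) * ∑ m ∈ range M, v k (y k m x a))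
    (hsq : ∀ k x a, sq (k + 1) x a = qv (k + 1) x a + α * sq k x a)
    (hεf : ∀ k x a, εf (k + 1) x a
      = (γ / (M : ℝ)) * ∑ m ∈ range M, v k (y k m x a) - γ * mdpP P (v k) x a)
    (hEf : ∀ k x a, Ef k x a = ∑ j ∈ range k, α ^ (k - 1 - j) * εf (j + 1) x a)
    {H : ℝ} (hH : H = 1 / (1 - γ)) (hVH : ‖V‖ ≤ H) (n : ℕ) (x : S) :
    |V x - v (n + 1) x| < 2 * H := by
  have hH0 : 0 < H := by rw [hH]; exact one_div_pos.2 (by linarith)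
  rcases hγ0.eq_or_lt with rfl | hγ
  · -- without discounting there is no sampling noise and `v (n + 1) = V`
    have hd : ∀ m, ‖(∑ j ∈ range m, α ^ j) • V - w m‖ ≤ 0 := fun m => by
      simpa [mixedGeomSum_zero_left] using
        norm_geomSum_smul_sub_w_le hP hα0 le_rfl hV hQ hs hw hw0 (n := m) (cE := 0)
          fun j _ => norm_le_of_forall_abs_le le_rfl fun x a => by simp [hEf, hεf]
    have hdecomp : V x - v (n + 1) x = ((∑ j ∈ range (n + 1), α ^ j) • V - w (n + 1)) x
        - α * ((∑ j ∈ range n, α ^ j) • V - w n) x := by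
      simp only [hv, Nat.add_sub_cancel, Pi.sub_apply, Pi.smul_apply, smul_eq_mul, geom_sum_succ]
      ring
    have h1 := (abs_apply_le_norm _ x).trans (hd (n + 1))
    have h2 := (abs_apply_le_norm _ x).trans (hd n)
    rw [hdecomp]
    refine (abs_sub _ _).trans_lt ?_
    rw [abs_mul, abs_of_nonneg hα0]
    nlinarith [abs_nonneg (((∑ j ∈ range n, α ^ j) • V - w n) x)]
  · have hG : ∑ j ∈ range (n + 1), γ ^ j < H := by
      rw [hH, lt_div_iff₀ (by linarith), mul_comm, mul_neg_geom_sum]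
      linarith [pow_pos hγ (n + 1)]
    calc |V x - v (n + 1) x| ≤ |V x| + |v (n + 1) x| := abs_sub _ _
      _ ≤ H + ∑ j ∈ range (n + 1), γ ^ j :=
          add_le_add ((abs_apply_le_norm V x).trans hVH)
            ((abs_apply_le_norm _ x).trans (norm_v_le hr hα0 hγ0 hw0 hv hqv hsq hw (n + 1)))
      _ < 2 * H := by linarith

end MDVI

theorem mdvi_coarse_value_estimation_bound_general
    (α : ℝ) (hα0 : 0 ≤ α) (hα1 : α < 1)
    (S A : Type) [Fintype S] [Fintype A] [Nonempty A] [DecidableEq A]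
    (P : S → A → S → ℝ) (hP : IsKernel P)
    (r : S → A → ℝ) (hr : ∀ x a, |r x a| ≤ 1)
    (γ H : ℝ) (hγ0 : 0 ≤ γ) (hγ1 : γ < 1) (hH : H = 1 / (1 - γ))
    (Qpol : (S → A → ℝ) → S → A → ℝ)
    (hQ : ∀ po, IsPolicy po → bellmanOp P r γ po (Qpol po) = Qpol po)
    (pstar : S → A → ℝ) (hpstar : IsPolicy pstar)
    (hopt : ∀ po, IsPolicy po → ∀ x, polAct po (Qpol po) x ≤ polAct pstar (Qpol pstar) x)
    (K M : ℕ)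
    (y : ℕ → ℕ → S → A → S)
    (w v : ℕ → S → ℝ) (sq qv : ℕ → S → A → ℝ)
    (hs0 : ∀ x a, sq 0 x a = 0) (hw0 : ∀ x, w 0 x = 0)
    (hv : ∀ k x, v k x = w k x - α * w (k - 1) x)
    (hqv : ∀ k x a, qv (k + 1) x a
      = r x a + (γ / (M : ℝ)) * ∑ m ∈ Finset.range M, v k (y k m x a))
    (hsq : ∀ k x a, sq (k + 1) x a = qv (k + 1) x a + α * sq k x a)
    (hwk : ∀ k x, w (k + 1) x = ⨆ a, sq (k + 1) x a)
    (εf Ef : ℕ → S → A → ℝ)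
    (hεf : ∀ k x a, εf (k + 1) x a
      = (γ / (M : ℝ)) * ∑ m ∈ Finset.range M, v k (y k m x a) - γ * mdpP P (v k) x a)
    (hEf : ∀ k x a, Ef k x a = ∑ j ∈ Finset.range k, α ^ (k - 1 - j) * εf (j + 1) x a)
    (δ : ℝ)
    (hE1 : ∀ k ∈ Finset.Icc 1 K, ∀ x a, |Ef k x a|
      < 3 * H * Real.sqrt (((1 : ℝ) / (1 - α)) *
          Real.log ((8 * K * Fintype.card S * Fintype.card A : ℝ) / δ) / (M : ℝ)))
    (hE2 : ∀ k ∈ Finset.Icc 1 K, ∀ x a, |εf k x a|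
      < 3 * H * Real.sqrt (
          Real.log ((8 * K * Fintype.card S * Fintype.card A : ℝ) / δ) / (M : ℝ)))
    :
    ∀ k ∈ Finset.Icc 1 K, ∀ x,
      |polAct pstar (Qpol pstar) x - v k x| <
        2 * H * min 1
          (γ ^ k + α ^ (k - 1)
            + (∑ j ∈ Finset.range (k - 1), γ ^ (k - 1 - j) * α ^ j) / ((1 : ℝ) / (1 - α))
            + 6 * H * Real.sqrt (
                Real.log ((8 * K * Fintype.card S * Fintype.card A : ℝ) / δ) / (M : ℝ))) := by
  intro k hk x
  obtain ⟨n, rfl⟩ : ∃ n, k = n + 1 := ⟨k - 1, by have := (Finset.mem_Icc.1 hk).1; omega⟩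
  have hIcc : ∀ j ≤ n, j + 1 ∈ Finset.Icc 1 K := fun j hj =>
    Finset.mem_Icc.2 ⟨by omega, (by omega : j + 1 ≤ n + 1).trans (Finset.mem_Icc.1 hk).2⟩
  set ι := Real.log ((8 * K * Fintype.card S * Fintype.card A : ℝ) / δ)
  set εb := 3 * H * Real.sqrt (ι / M)
  set EB := 3 * H * Real.sqrt (((1 : ℝ) / (1 - α)) * ι / M)
  have hH0 : 0 < H := hH ▸ one_div_pos.2 (by linarith)
  have hεb : 0 < εb := (abs_nonneg _).trans_lt (hE2 1 (hIcc 0 n.zero_le) x (Classical.arbitrary A))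
  have hEBε : (1 - α) * EB ≤ εb := by
    rw [mul_left_comm]
    exact mul_le_mul_of_nonneg_left (mul_sqrt_one_div_mul_div_le (by linarith) (by linarith) _ _)
      (by positivity)
  have hV := polAct_eq_ciSup_of_optimal hP hγ0 hγ1 hQ hpstar hopt
  have hQV : ∀ x a, Qpol pstar x a = r x a + γ * mdpP P (polAct pstar (Qpol pstar)) x a :=
    fun x a => (congrFun (congrFun (hQ pstar hpstar) x) a).symm
  have hVH := hH ▸ norm_polAct_le_of_bellmanOp_eq hP hr hγ0 hγ1 hpstar (hQ pstar hpstar)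
  have hs := sq_eq_geomSum_mul_add hs0 hw0 hv (fun k x a => by rw [hqv, hεf]; ring) hsq
    (fun x a => by simp [hEf]) (Ef_succ hEf)
  have hw := w_eq_ciSup hs0 hw0 hwk
  have hbound := abs_sub_v_succ_le hP hr hα0 hα1.le hγ0 hγ1 hV hQV hs hw hw0 hv (Ef_succ hEf) hH hVH
    (fun j hj => norm_le_of_forall_abs_le hεb.le fun x a => (hE2 _ (hIcc j hj) x a).le)
    (fun j hj => norm_le_of_forall_abs_le (C := EB) (by positivity) fun x a => by
      rcases j with _ | j
      · simp [hEf]; positivity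
      · exact (hE1 _ (hIcc j (by omega)) x a).le) x
  rw [mixedGeomSum] at hbound
  rw [mul_min_of_nonneg _ _ (by positivity : (0 : ℝ) ≤ 2 * H), lt_min_iff, mul_one,
    Nat.add_sub_cancel, div_div_eq_mul_div, div_one, show 6 * H * √(ι / M) = 2 * εb by ring]
  refine ⟨abs_sub_v_succ_lt_two_mul hP hr hα0 hγ0 hγ1 hV hQV hs hw hw0 hv hqv hsq hεf hEf hH hVH
    n x, hbound.trans_lt ?_⟩
  nlinarith [mul_le_mul_of_nonneg_right hEBε hH0.le, mul_pos hεb hH0,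
    mul_nonneg hH0.le (pow_nonneg hγ0 (n + 1))]

/-- Lemma F.5: coarse bound on the value estimation error. -/
theorem mdvi_coarse_value_estimation_bound
    (α : ℝ) (hα0 : 0 ≤ α) (hα1 : α < 1)
    (S A : Type) [Fintype S] [Fintype A] [Nonempty S] [Nonempty A] [DecidableEq A]
    (P : S → A → S → ℝ) (hP : IsKernel P)
    (r : S → A → ℝ) (hr : ∀ x a, |r x a| ≤ 1)
    (γ H : ℝ) (hγ0 : 0 ≤ γ) (hγ1 : γ < 1) (hH : H = 1 / (1 - γ))
    (Qpol : (S → A → ℝ) → S → A → ℝ)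
    (hQ : ∀ po, IsPolicy po → bellmanOp P r γ po (Qpol po) = Qpol po)
    (pstar : S → A → ℝ) (hpstar : IsPolicy pstar)
    (hopt : ∀ po, IsPolicy po → ∀ x, polAct po (Qpol po) x ≤ polAct pstar (Qpol pstar) x)
    (K M : ℕ) (hM : 1 ≤ M)
    (y : ℕ → ℕ → S → A → S)
    (w v : ℕ → S → ℝ) (sq qv : ℕ → S → A → ℝ)
    (hs0 : ∀ x a, sq 0 x a = 0) (hw0 : ∀ x, w 0 x = 0)
    (hv : ∀ k x, v k x = w k x - α * w (k - 1) x)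
    (hqv : ∀ k x a, qv (k + 1) x a
      = r x a + (γ / (M : ℝ)) * ∑ m ∈ Finset.range M, v k (y k m x a))
    (hsq : ∀ k x a, sq (k + 1) x a = qv (k + 1) x a + α * sq k x a)
    (hwk : ∀ k x, w (k + 1) x = ⨆ a, sq (k + 1) x a)
    (pol : ℕ → S → A)
    (hgreedy : ∀ k x a, sq k x a ≤ sq k x (pol k x))
    (εf Ef : ℕ → S → A → ℝ)
    (hεf : ∀ k x a, εf (k + 1) x a
      = (γ / (M : ℝ)) * ∑ m ∈ Finset.range M, v k (y k m x a) - γ * mdpP P (v k) x a)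
    (hEf : ∀ k x a, Ef k x a = ∑ j ∈ Finset.range k, α ^ (k - 1 - j) * εf (j + 1) x a)
    (δ : ℝ) (hδ0 : 0 < δ) (hδ1 : δ < 1)
    (hE1 : ∀ k ∈ Finset.Icc 1 K, ∀ x a, |Ef k x a|
      < 3 * H * Real.sqrt (((1 : ℝ) / (1 - α)) *
          Real.log ((8 * K * Fintype.card S * Fintype.card A : ℝ) / δ) / (M : ℝ)))
    (hE2 : ∀ k ∈ Finset.Icc 1 K, ∀ x a, |εf k x a|
      < 3 * H * Real.sqrt (
          Real.log ((8 * K * Fintype.card S * Fintype.card A : ℝ) / δ) / (M : ℝ)))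
    :
    ∀ k ∈ Finset.Icc 1 K, ∀ x,
      |polAct pstar (Qpol pstar) x - v k x| <
        2 * H * min 1
          (γ ^ k + α ^ (k - 1)
            + (∑ j ∈ Finset.range (k - 1), γ ^ (k - 1 - j) * α ^ j) / ((1 : ℝ) / (1 - α))
            + 6 * H * Real.sqrt (
                Real.log ((8 * K * Fintype.card S * Fintype.card A : ℝ) / δ) / (M : ℝ))) :=
  mdvi_coarse_value_estimation_bound_general α hα0 hα1 S A P hP r hr γ H hγ0 hγ1 hH Qpol hQ pstar
    hpstar hopt K M y w v sq qv hs0 hw0 hv hqv hsq hwk εf Ef hεf hEf δ hE1 hE2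
end
end

section
/- (Lemma E.2, total variance bound for a non-stationary policy) Suppose a sequence of deterministic policies (π_k)_{k=0}^K. Define Q^{π'_0} := Q^{π_0}, V^{π'_k} := π_k Q^{π'_k}, and Q^{π'_k} := r + γP V^{π'_{k−1}} for k ∈ {1,…,K}. Let σ_0(x,a) := √(P(V^{π_0})²(x,a) − (PV^{π_0})²(x,a)) and, for k ∈ {1,…,K}, σ_k(x,a) := √(P(V^{π'_{k−1}})²(x,a) − (PV^{π'_{k−1}})²(x,a)). Then for any k ∈ {1,…,K}: Σ_{j=0}^{k−1} γ^{j+1} P_{k−j}^{k−1} σ_{k−j} ≤ √(2H³)·1 pointwise. -/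
open MeasureTheory ProbabilityTheory Finset Real

noncomputable section

namespace TVBaux

lemma sum_sq_jensen {ι : Type} [Fintype ι] (w f : ι → ℝ) (hw : ∀ i, 0 ≤ w i)
    (h1 : ∑ i, w i = 1) : (∑ i, w i * f i) ^ 2 ≤ ∑ i, w i * f i ^ 2 := by
  have h := Finset.sum_mul_sq_le_sq_mul_sq Finset.univ (fun i => Real.sqrt (w i))
    (fun i => Real.sqrt (w i) * f i)
  calc (∑ i, w i * f i) ^ 2
      = (∑ i, Real.sqrt (w i) * (Real.sqrt (w i) * f i)) ^ 2 := by
        congr 1; refine Finset.sum_congr rfl fun i _ => ?_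
        rw [← mul_assoc, Real.mul_self_sqrt (hw i)]
    _ ≤ (∑ i, Real.sqrt (w i) ^ 2) * ∑ i, (Real.sqrt (w i) * f i) ^ 2 := h
    _ = (∑ i, w i) * ∑ i, w i * f i ^ 2 := by
        congr 1
        · exact Finset.sum_congr rfl fun i _ => Real.sq_sqrt (hw i)
        · refine Finset.sum_congr rfl fun i _ => ?_
          rw [mul_pow, Real.sq_sqrt (hw i)]
    _ = ∑ i, w i * f i ^ 2 := by rw [h1, one_mul]

variable {S A : Type} [Fintype S] [Fintype A]

lemma mdpP_mono {P : S → A → S → ℝ} (hP : IsKernel P) {v u : S → ℝ}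
    (h : ∀ z, v z ≤ u z) (x : S) (a : A) : mdpP P v x a ≤ mdpP P u x a :=
  Finset.sum_le_sum fun z _ => mul_le_mul_of_nonneg_left (h z) (hP.1 x a z)

lemma mdpP_const {P : S → A → S → ℝ} (hP : IsKernel P) (c : ℝ) (x : S) (a : A) :
    mdpP P (fun _ => c) x a = c := by
  unfold mdpP; rw [← Finset.sum_mul, hP.2 x a, one_mul]

lemma mdpP_abs_le {P : S → A → S → ℝ} (hP : IsKernel P) {v : S → ℝ} {c : ℝ}
    (h : ∀ z, |v z| ≤ c) (x : S) (a : A) : |mdpP P v x a| ≤ c := by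
  calc |mdpP P v x a| ≤ ∑ z, |P x a z * v z| := Finset.abs_sum_le_sum_abs _ _
    _ ≤ ∑ z, P x a z * c := by
        refine Finset.sum_le_sum fun z _ => ?_
        rw [abs_mul, abs_of_nonneg (hP.1 x a z)]
        exact mul_le_mul_of_nonneg_left (h z) (hP.1 x a z)
    _ = c := by rw [← Finset.sum_mul, hP.2 x a, one_mul]

lemma mdpP_sq {P : S → A → S → ℝ} (hP : IsKernel P) (v : S → ℝ) (x : S) (a : A) :
    (mdpP P v x a) ^ 2 ≤ mdpP P (fun z => v z ^ 2) x a :=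
  sum_sq_jensen (P x a) v (hP.1 x a) (hP.2 x a)

lemma mdpP_add (P : S → A → S → ℝ) (v u : S → ℝ) (x : S) (a : A) :
    mdpP P (fun z => v z + u z) x a = mdpP P v x a + mdpP P u x a := by
  unfold mdpP; rw [← Finset.sum_add_distrib]
  exact Finset.sum_congr rfl fun z _ => by ring

lemma mdpP_smul (P : S → A → S → ℝ) (c : ℝ) (v : S → ℝ) (x : S) (a : A) :
    mdpP P (fun z => c * v z) x a = c * mdpP P v x a := by
  unfold mdpP; rw [Finset.mul_sum]
  exact Finset.sum_congr rfl fun z _ => by ring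

lemma polAct_det [DecidableEq A] (dd : S → A) (q : S → A → ℝ) :
    polAct (detPol dd) q = fun x => q x (dd x) := by
  funext x
  unfold polAct detPol
  rw [Finset.sum_eq_single (dd x)]
  · simp
  · intro b _ hb; simp [hb]
  · intro h; exact absurd (Finset.mem_univ _) h

lemma Ppi_det [DecidableEq A] (P : S → A → S → ℝ) (dd : S → A) (q : S → A → ℝ) :
    Ppi P (detPol dd) q = mdpP P (fun z => q z (dd z)) := by
  unfold Ppi; rw [polAct_det]

variable [DecidableEq A] {P : S → A → S → ℝ} {d : ℕ → S → A}

lemma Pprod_mono (hP : IsKernel P) (j : ℕ) :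
    ∀ (n : ℕ) {q q' : S → A → ℝ}, (∀ y b, q y b ≤ q' y b) → ∀ x a,
    PprodN P (fun i => detPol (d i)) j n q x a ≤ PprodN P (fun i => detPol (d i)) j n q' x a
  | 0, q, q', h, x, a => h x a
  | n+1, q, q', h, x, a => by
    show Ppi P (detPol (d (j+n))) (PprodN P (fun i => detPol (d i)) j n q) x a
      ≤ Ppi P (detPol (d (j+n))) (PprodN P (fun i => detPol (d i)) j n q') x a
    rw [Ppi_det, Ppi_det]
    exact mdpP_mono hP (fun z => Pprod_mono hP j n h z _) x a

lemma Pprod_const (hP : IsKernel P) (j : ℕ) :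
    ∀ (n : ℕ) (c : ℝ) (x : S) (a : A),
    PprodN P (fun i => detPol (d i)) j n (fun _ _ => c) x a = c
  | 0, c, x, a => rfl
  | n+1, c, x, a => by
    show Ppi P (detPol (d (j+n))) (PprodN P (fun i => detPol (d i)) j n fun _ _ => c) x a = c
    rw [Ppi_det]
    have : (fun z => PprodN P (fun i => detPol (d i)) j n (fun _ _ => c) z (d (j+n) z))
        = fun _ : S => c := by
      funext z; exact Pprod_const hP j n c z _
    rw [this, mdpP_const hP]

lemma Pprod_nonneg (hP : IsKernel P) (j n : ℕ) {q : S → A → ℝ}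
    (h : ∀ y b, 0 ≤ q y b) (x : S) (a : A) :
    0 ≤ PprodN P (fun i => detPol (d i)) j n q x a := by
  have := Pprod_mono (d := d) hP j n (q := fun _ _ => (0:ℝ)) (q' := q) h x a
  rwa [Pprod_const hP] at this

lemma Pprod_le_const (hP : IsKernel P) (j n : ℕ) {q : S → A → ℝ} {c : ℝ}
    (h : ∀ y b, q y b ≤ c) (x : S) (a : A) :
    PprodN P (fun i => detPol (d i)) j n q x a ≤ c := by
  have := Pprod_mono (d := d) hP j n (q := q) (q' := fun _ _ => c) h x a
  rwa [Pprod_const hP] at this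

lemma Pprod_sq (hP : IsKernel P) (j : ℕ) :
    ∀ (n : ℕ) (q : S → A → ℝ) (x : S) (a : A),
    (PprodN P (fun i => detPol (d i)) j n q x a) ^ 2
      ≤ PprodN P (fun i => detPol (d i)) j n (fun y b => q y b ^ 2) x a
  | 0, q, x, a => le_refl _
  | n+1, q, x, a => by
    show (Ppi P (detPol (d (j+n))) (PprodN P (fun i => detPol (d i)) j n q) x a) ^ 2
      ≤ Ppi P (detPol (d (j+n))) (PprodN P (fun i => detPol (d i)) j n fun y b => q y b ^ 2) x a
    rw [Ppi_det, Ppi_det]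
    calc (mdpP P (fun z => PprodN P (fun i => detPol (d i)) j n q z (d (j+n) z)) x a) ^ 2
        ≤ mdpP P (fun z => (PprodN P (fun i => detPol (d i)) j n q z (d (j+n) z)) ^ 2) x a :=
          mdpP_sq hP _ x a
      _ ≤ mdpP P (fun z => PprodN P (fun i => detPol (d i)) j n (fun y b => q y b ^ 2) z (d (j+n) z)) x a :=
          mdpP_mono hP (fun z => Pprod_sq hP j n q z _) x a

lemma Pprod_add (hP : IsKernel P) (j : ℕ) :
    ∀ (n : ℕ) (q q' : S → A → ℝ) (x : S) (a : A),
    PprodN P (fun i => detPol (d i)) j n (fun y b => q y b + q' y b) x a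
      = PprodN P (fun i => detPol (d i)) j n q x a + PprodN P (fun i => detPol (d i)) j n q' x a
  | 0, q, q', x, a => rfl
  | n+1, q, q', x, a => by
    show Ppi P (detPol (d (j+n))) (PprodN P (fun i => detPol (d i)) j n fun y b => q y b + q' y b) x a = _
    rw [Ppi_det]
    have : (fun z => PprodN P (fun i => detPol (d i)) j n (fun y b => q y b + q' y b) z (d (j+n) z))
        = fun z => PprodN P (fun i => detPol (d i)) j n q z (d (j+n) z)
          + PprodN P (fun i => detPol (d i)) j n q' z (d (j+n) z) := by
      funext z; exact Pprod_add hP j n q q' z _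
    rw [this, mdpP_add]
    show _ = Ppi P (detPol (d (j+n))) _ x a + Ppi P (detPol (d (j+n))) _ x a
    rw [Ppi_det, Ppi_det]

lemma Pprod_smul (hP : IsKernel P) (j : ℕ) :
    ∀ (n : ℕ) (c : ℝ) (q : S → A → ℝ) (x : S) (a : A),
    PprodN P (fun i => detPol (d i)) j n (fun y b => c * q y b) x a
      = c * PprodN P (fun i => detPol (d i)) j n q x a
  | 0, c, q, x, a => rfl
  | n+1, c, q, x, a => by
    show Ppi P (detPol (d (j+n))) (PprodN P (fun i => detPol (d i)) j n fun y b => c * q y b) x a = _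
    rw [Ppi_det]
    have : (fun z => PprodN P (fun i => detPol (d i)) j n (fun y b => c * q y b) z (d (j+n) z))
        = fun z => c * PprodN P (fun i => detPol (d i)) j n q z (d (j+n) z) := by
      funext z; exact Pprod_smul hP j n c q z _
    rw [this, mdpP_smul]
    show _ = c * Ppi P (detPol (d (j+n))) _ x a
    rw [Ppi_det]

lemma Pprod_shift (po : ℕ → S → A → ℝ) (j : ℕ) :
    ∀ (n : ℕ) (q : S → A → ℝ),
    PprodN P po j (n+1) q = PprodN P po (j+1) n (Ppi P (po j) q)
  | 0, q => by
    show Ppi P (po (j+0)) (PprodN P po j 0 q) = Ppi P (po j) q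
    rw [Nat.add_zero]; rfl
  | n+1, q => by
    show Ppi P (po (j + (n+1))) (PprodN P po j (n+1) q)
      = Ppi P (po ((j+1)+n)) (PprodN P po (j+1) n (Ppi P (po j) q))
    rw [Pprod_shift po j n q]
    have : j + (n+1) = (j+1) + n := by omega
    rw [this]

end TVBaux


set_option maxHeartbeats 2000000 in
open TVBaux in
/-- Lemma E.2: total variance bound for a non-stationary policy. -/
theorem total_variance_bound_nonstationary
    (S A : Type) [Fintype S] [Fintype A] [Nonempty S] [Nonempty A] [DecidableEq A]
    (P : S → A → S → ℝ) (hP : IsKernel P)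
    (r : S → A → ℝ) (hr : ∀ x a, |r x a| ≤ 1)
    (γ H : ℝ) (hγ0 : 0 ≤ γ) (hγ1 : γ < 1) (hH : H = 1 / (1 - γ))
    (K : ℕ) (d : ℕ → S → A)
    (Qns : ℕ → S → A → ℝ)
    (hQ0 : bellmanOp P r γ (detPol (d 0)) (Qns 0) = Qns 0)
    (hQrec : ∀ k x a, Qns (k + 1) x a
      = r x a + γ * mdpP P (polAct (detPol (d k)) (Qns k)) x a) :
    ∀ k ∈ Finset.Icc 1 K, ∀ x a,
      ∑ j ∈ Finset.range k, γ ^ (j + 1) *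
          PprodN P (fun i => detPol (d i)) (k - j) j
            (sigmaP P (polAct (detPol (d (k - j - 1))) (Qns (k - j - 1)))) x a
        ≤ Real.sqrt (2 * H ^ 3) := by
  intro k hk x a
  have hk1 : 1 ≤ k := (Finset.mem_Icc.mp hk).1
  have h1γ : 0 < 1 - γ := by linarith
  have hHval : H * (1 - γ) = 1 := by rw [hH]; field_simp
  have hH1 : 1 ≤ H := by nlinarith
  have hH0 : 0 < H := by linarith
  have hHrec : 1 + γ * H = H := by nlinarith
  -- bound on Q functions
  have hQb : ∀ m y b, |Qns m y b| ≤ H := by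
    intro m
    induction m with
    | zero =>
      obtain ⟨p, hp⟩ := Finite.exists_max (fun p : S × A => |Qns 0 p.1 p.2|)
      set M := |Qns 0 p.1 p.2| with hM
      have hMb : ∀ y b, |Qns 0 y b| ≤ M := fun y b => hp (y, b)
      have habs : |mdpP P (polAct (detPol (d 0)) (Qns 0)) p.1 p.2| ≤ M := by
        rw [polAct_det]
        exact mdpP_abs_le hP (fun z => hMb z (d 0 z)) p.1 p.2
      have hfix := congrFun (congrFun hQ0 p.1) p.2
      have hMle : M ≤ 1 + γ * M := by
        calc M = |r p.1 p.2 + γ * mdpP P (polAct (detPol (d 0)) (Qns 0)) p.1 p.2| := by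
              rw [hM, ← hfix]; rfl
          _ ≤ |r p.1 p.2| + |γ * mdpP P (polAct (detPol (d 0)) (Qns 0)) p.1 p.2| :=
              abs_add_le _ _
          _ ≤ 1 + γ * M := by
              rw [abs_mul, abs_of_nonneg hγ0]
              exact add_le_add (hr _ _) (mul_le_mul_of_nonneg_left habs hγ0)
      have hMH : M ≤ H := by nlinarith
      exact fun y b => le_trans (hMb y b) hMH
    | succ m ih =>
      intro y b
      rw [hQrec m y b, polAct_det]
      have habs : |mdpP P (fun z => Qns m z (d m z)) y b| ≤ H :=
        mdpP_abs_le hP (fun z => ih z (d m z)) y b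
      calc |r y b + γ * mdpP P (fun z => Qns m z (d m z)) y b|
          ≤ |r y b| + |γ * mdpP P (fun z => Qns m z (d m z)) y b| := abs_add_le _ _
        _ ≤ 1 + γ * H := by
            rw [abs_mul, abs_of_nonneg hγ0]
            exact add_le_add (hr _ _) (mul_le_mul_of_nonneg_left habs hγ0)
        _ = H := hHrec
  -- abbreviations
  set T : ℕ → ℝ := fun j => PprodN P (fun i => detPol (d i)) (k - j) j
    (sigmaP P (polAct (detPol (d (k - j - 1))) (Qns (k - j - 1)))) x a with hT
  set U : ℕ → ℝ := fun j => γ ^ j * PprodN P (fun i => detPol (d i)) (k - j) j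
    (fun y b => Qns (k - j) y b ^ 2) x a with hU
  have hTnn : ∀ j, 0 ≤ T j := fun j =>
    Pprod_nonneg hP _ _ (fun y b => Real.sqrt_nonneg _) x a
  have hUnn : ∀ j, 0 ≤ U j := fun j =>
    mul_nonneg (pow_nonneg hγ0 j) (Pprod_nonneg hP _ _ (fun y b => sq_nonneg _) x a)
  -- key per-term inequality
  have key : ∀ j ∈ Finset.range k,
      γ ^ (j + 2) * PprodN P (fun i => detPol (d i)) (k - j) j
        (fun y b => sigmaP P (polAct (detPol (d (k - j - 1))) (Qns (k - j - 1))) y b ^ 2) x a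
      ≤ U (j + 1) - U j + 2 * H * γ ^ j := by
    intro j hj
    have hjk : j < k := Finset.mem_range.mp hj
    set m := k - j - 1 with hm
    have hkj : k - j = m + 1 := by omega
    have hkj1 : k - (j + 1) = m := by omega
    -- pointwise inequality
    have hpt : ∀ y b,
        γ ^ 2 * sigmaP P (polAct (detPol (d m)) (Qns m)) y b ^ 2 + Qns (m+1) y b ^ 2
        ≤ γ ^ 2 * Ppi P (detPol (d m)) (fun z c => Qns m z c ^ 2) y b + 2 * H := by
      intro y b
      have hV : polAct (detPol (d m)) (Qns m) = fun z => Qns m z (d m z) := polAct_det _ _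
      have hvar : (mdpP P (fun z => Qns m z (d m z)) y b) ^ 2
          ≤ mdpP P (fun z => Qns m z (d m z) ^ 2) y b := mdpP_sq hP _ y b
      have hsig : sigmaP P (polAct (detPol (d m)) (Qns m)) y b ^ 2
          = mdpP P (fun z => Qns m z (d m z) ^ 2) y b
            - (mdpP P (fun z => Qns m z (d m z)) y b) ^ 2 := by
        rw [hV]
        exact Real.sq_sqrt (sub_nonneg.mpr hvar)
      have hrecv : γ * mdpP P (fun z => Qns m z (d m z)) y b = Qns (m+1) y b - r y b := by
        have h := hQrec m y b
        rw [polAct_det] at h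
        linarith
      have hPpi : Ppi P (detPol (d m)) (fun z c => Qns m z c ^ 2) y b
          = mdpP P (fun z => Qns m z (d m z) ^ 2) y b := by
        rw [Ppi_det]
      rw [hsig, hPpi]
      have hQ1 := abs_le.mp (hQb (m+1) y b)
      have hrb := abs_le.mp (hr y b)
      have h2rq : r y b * Qns (m+1) y b ≤ H := by
        nlinarith [mul_nonneg (by linarith : (0:ℝ) ≤ 1 - r y b)
            (by linarith : 0 ≤ H + Qns (m+1) y b),
          mul_nonneg (by linarith : (0:ℝ) ≤ 1 + r y b)
            (by linarith : 0 ≤ H - Qns (m+1) y b)]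
      have hsq : (γ * mdpP P (fun z => Qns m z (d m z)) y b) ^ 2
          = (Qns (m+1) y b - r y b) ^ 2 := by rw [hrecv]
      nlinarith [sq_nonneg (r y b)]
    -- apply the product operator
    have hop := Pprod_mono (d := d) hP (k - j) j
      (q := fun y b => γ ^ 2 * sigmaP P (polAct (detPol (d m)) (Qns m)) y b ^ 2
        + Qns (m+1) y b ^ 2)
      (q' := fun y b => γ ^ 2 * Ppi P (detPol (d m)) (fun z c => Qns m z c ^ 2) y b + 2 * H)
      hpt x a
    rw [Pprod_add hP, Pprod_add hP, Pprod_smul hP, Pprod_smul hP, Pprod_const hP] at hop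
    have hshift : PprodN P (fun i => detPol (d i)) (k - j) j
        (Ppi P (detPol (d m)) (fun z c => Qns m z c ^ 2)) x a
        = PprodN P (fun i => detPol (d i)) (k - (j+1)) (j+1)
          (fun y b => Qns (k - (j+1)) y b ^ 2) x a := by
      rw [hkj1]
      have := Pprod_shift (P := P) (fun i => detPol (d i)) m j
        (fun y b => Qns m y b ^ 2)
      rw [this]
      have hm1 : m + 1 = k - j := hkj.symm
      rw [hm1]
    rw [hshift] at hop
    -- now multiply by γ^j and rearrange
    have hγj : (0:ℝ) ≤ γ ^ j := pow_nonneg hγ0 j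
    have hmul := mul_le_mul_of_nonneg_left hop hγj
    have he1 : γ ^ (j+2) = γ ^ j * γ ^ 2 := by ring
    have hUj1 : U (j+1) = γ ^ (j+1) * PprodN P (fun i => detPol (d i)) (k - (j+1)) (j+1)
        (fun y b => Qns (k - (j+1)) y b ^ 2) x a := rfl
    have hUj : U j = γ ^ j * PprodN P (fun i => detPol (d i)) (k - j) j
        (fun y b => Qns (k - j) y b ^ 2) x a := rfl
    have hmkj : (fun y b => Qns (m+1) y b ^ 2) = (fun y b => Qns (k - j) y b ^ 2) := by
      rw [hkj]
    rw [hmkj] at hmul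
    have hγU : γ * U (j+1) ≤ U (j+1) := by
      nlinarith [hUnn (j+1)]
    calc γ ^ (j + 2) * PprodN P (fun i => detPol (d i)) (k - j) j
          (fun y b => sigmaP P (polAct (detPol (d (k - j - 1))) (Qns (k - j - 1))) y b ^ 2) x a
        = γ ^ j * (γ ^ 2 * PprodN P (fun i => detPol (d i)) (k - j) j
          (fun y b => sigmaP P (polAct (detPol (d m)) (Qns m)) y b ^ 2) x a) := by
          rw [← hm]; ring
      _ ≤ γ * U (j+1) - U j + 2 * H * γ ^ j := by
          rw [hUj1, hUj]
          rw [mul_add, mul_add] at hmul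
          have hpw : γ * (γ ^ (j+1) * PprodN P (fun i => detPol (d i)) (k - (j+1)) (j+1)
              (fun y b => Qns (k - (j+1)) y b ^ 2) x a)
              = γ ^ j * (γ ^ 2 * PprodN P (fun i => detPol (d i)) (k - (j+1)) (j+1)
              (fun y b => Qns (k - (j+1)) y b ^ 2) x a) := by ring
          rw [hpw]
          have h2h : γ ^ j * (2 * H) = 2 * H * γ ^ j := by ring
          linarith [hmul, h2h.le, h2h.ge]
      _ ≤ U (j + 1) - U j + 2 * H * γ ^ j := by linarith [hγU]
  -- Step B : bound on the weighted sum of variances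
  have hgeom : ∑ j ∈ Finset.range k, γ ^ j = H * (1 - γ ^ k) := by
    rw [geom_sum_eq (by intro h; rw [h] at hγ1; exact lt_irrefl 1 hγ1) k]
    rw [div_eq_iff (by intro h; apply absurd h; intro h'; linarith : γ - 1 ≠ 0)]
    linear_combination (1 - γ ^ k) * hHval
  have hγk : (0:ℝ) ≤ γ ^ k := pow_nonneg hγ0 k
  have hγk1 : γ ^ k ≤ 1 := pow_le_one₀ hγ0 (le_of_lt hγ1)
  have hUk : U k ≤ γ ^ k * H ^ 2 := by
    have hq : ∀ y b, Qns (k - k) y b ^ 2 ≤ H ^ 2 := by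
      intro y b
      have := abs_le.mp (hQb (k - k) y b)
      nlinarith
    exact mul_le_mul_of_nonneg_left (Pprod_le_const hP _ _ hq x a) hγk
  have stepB : ∑ j ∈ Finset.range k, γ ^ (j + 2) * T j ^ 2 ≤ 2 * H ^ 2 := by
    have h1 : ∑ j ∈ Finset.range k, γ ^ (j + 2) * T j ^ 2
        ≤ ∑ j ∈ Finset.range k, (U (j + 1) - U j + 2 * H * γ ^ j) := by
      refine Finset.sum_le_sum fun j hj => ?_
      refine le_trans ?_ (key j hj)
      have hTsq : T j ^ 2 ≤ PprodN P (fun i => detPol (d i)) (k - j) j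
          (fun y b => sigmaP P (polAct (detPol (d (k - j - 1))) (Qns (k - j - 1))) y b ^ 2) x a :=
        Pprod_sq hP _ _ _ x a
      exact mul_le_mul_of_nonneg_left hTsq (pow_nonneg hγ0 _)
    have h2 : ∑ j ∈ Finset.range k, (U (j + 1) - U j + 2 * H * γ ^ j)
        = (U k - U 0) + 2 * H * ∑ j ∈ Finset.range k, γ ^ j := by
      rw [Finset.sum_add_distrib, Finset.sum_range_sub U, Finset.mul_sum]
    rw [h2] at h1
    rw [hgeom] at h1
    have := hUnn 0
    nlinarith [hUk]
  -- Step A : Cauchy-Schwarz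
  have hcs : (∑ j ∈ Finset.range k, γ ^ (j + 1) * T j) ^ 2
      ≤ (∑ j ∈ Finset.range k, γ ^ j) * ∑ j ∈ Finset.range k, γ ^ (j + 2) * T j ^ 2 := by
    have h := Finset.sum_mul_sq_le_sq_mul_sq (Finset.range k)
      (fun j => Real.sqrt (γ ^ j)) (fun j => Real.sqrt (γ ^ j) * (γ * T j))
    calc (∑ j ∈ Finset.range k, γ ^ (j + 1) * T j) ^ 2
        = (∑ j ∈ Finset.range k, Real.sqrt (γ ^ j) * (Real.sqrt (γ ^ j) * (γ * T j))) ^ 2 := by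
          congr 1
          refine Finset.sum_congr rfl fun j _ => ?_
          rw [← mul_assoc, ← mul_assoc, Real.mul_self_sqrt (pow_nonneg hγ0 j)]
          ring
      _ ≤ (∑ j ∈ Finset.range k, Real.sqrt (γ ^ j) ^ 2)
          * ∑ j ∈ Finset.range k, (Real.sqrt (γ ^ j) * (γ * T j)) ^ 2 := h
      _ = (∑ j ∈ Finset.range k, γ ^ j) * ∑ j ∈ Finset.range k, γ ^ (j + 2) * T j ^ 2 := by
          congr 1
          · exact Finset.sum_congr rfl fun j _ => Real.sq_sqrt (pow_nonneg hγ0 j)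
          · refine Finset.sum_congr rfl fun j _ => ?_
            rw [mul_pow, Real.sq_sqrt (pow_nonneg hγ0 j)]
            ring
  have hsum_nn : 0 ≤ ∑ j ∈ Finset.range k, γ ^ (j + 1) * T j :=
    Finset.sum_nonneg fun j _ => mul_nonneg (pow_nonneg hγ0 _) (hTnn j)
  have hsumB_nn : 0 ≤ ∑ j ∈ Finset.range k, γ ^ (j + 2) * T j ^ 2 :=
    Finset.sum_nonneg fun j _ => mul_nonneg (pow_nonneg hγ0 _) (sq_nonneg _)
  have hgeomH : ∑ j ∈ Finset.range k, γ ^ j ≤ H := by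
    rw [hgeom]; nlinarith
  have hprod : (∑ j ∈ Finset.range k, γ ^ j) * ∑ j ∈ Finset.range k, γ ^ (j + 2) * T j ^ 2
      ≤ 2 * H ^ 3 := by
    have : H * (2 * H ^ 2) = 2 * H ^ 3 := by ring
    calc (∑ j ∈ Finset.range k, γ ^ j) * ∑ j ∈ Finset.range k, γ ^ (j + 2) * T j ^ 2
        ≤ H * (2 * H ^ 2) :=
          mul_le_mul hgeomH stepB hsumB_nn (le_of_lt hH0)
      _ = 2 * H ^ 3 := this
  calc ∑ j ∈ Finset.range k, γ ^ (j + 1) * T j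
      = Real.sqrt ((∑ j ∈ Finset.range k, γ ^ (j + 1) * T j) ^ 2) :=
        (Real.sqrt_sq hsum_nn).symm
    _ ≤ Real.sqrt (2 * H ^ 3) := Real.sqrt_le_sqrt (le_trans hcs hprod)
end
end

section
/- (Lemma C.5) Suppose α, γ ∈ [0,1), ε ∈ (0,1], c ∈ [1,∞), m a positive integer, and n ∈ [0,∞). Let H := 1/(1−γ) and K := (m/(1−α))·log(cH/ε). Then K^n · α^K ≤ (mn/((1−α)e))^n · (ε/(cH))^{m−1}. -/
/-- Key calculus fact: `t^n e^{-t} ≤ (n/e)^n` for `t, n ≥ 0` (rpow, `0^0 = 1`). -/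
lemma aux_pow_exp_le (t n : ℝ) (ht : 0 ≤ t) (hn : 0 ≤ n) :
    t ^ n * Real.exp (-t) ≤ (n / Real.exp 1) ^ n := by
  rcases eq_or_lt_of_le hn with hn0 | hn0
  · rw [← hn0]
    simp only [Real.rpow_zero, one_mul]
    exact Real.exp_le_one_iff.mpr (by linarith)
  rcases eq_or_lt_of_le ht with ht0 | ht0
  · rw [← ht0, Real.zero_rpow (ne_of_gt hn0), zero_mul]
    exact Real.rpow_nonneg (by positivity) n
  · have hne : n / Real.exp 1 > 0 := by positivity
    rw [Real.rpow_def_of_pos ht0, Real.rpow_def_of_pos hne, ← Real.exp_add]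
    apply Real.exp_le_exp.mpr
    have hlog : Real.log (n / Real.exp 1) = Real.log n - 1 := by
      rw [Real.log_div (ne_of_gt hn0) (ne_of_gt (Real.exp_pos 1)), Real.log_exp]
    rw [hlog]
    have h1 : Real.log (t / n) ≤ t / n - 1 :=
      Real.log_le_sub_one_of_pos (by positivity)
    have h2 : Real.log (t / n) = Real.log t - Real.log n :=
      Real.log_div (ne_of_gt ht0) (ne_of_gt hn0)
    have h3 : Real.log t - Real.log n ≤ t / n - 1 := by rw [← h2]; exact h1
    have h4 : n * (Real.log t - Real.log n) ≤ n * (t / n - 1) :=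
      mul_le_mul_of_nonneg_left h3 hn
    have h5 : n * (t / n - 1) = t - n := by field_simp
    nlinarith [h4, h5]

/-- Lemma C.5: for `K = (m/(1−α))·log(cH/ε)`,
`K^n α^K ≤ (mn/((1−α)e))^n (ε/(cH))^{m−1}`. -/
theorem K_pow_alpha_pow_K_bound
    (α γ ε c n : ℝ) (m : ℕ)
    (hα0 : 0 ≤ α) (hα1 : α < 1) (hγ0 : 0 ≤ γ) (hγ1 : γ < 1)
    (hε0 : 0 < ε) (hε1 : ε ≤ 1) (hc : 1 ≤ c) (hm : 1 ≤ m) (hn : 0 ≤ n)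
    (H K : ℝ) (hH : H = 1 / (1 - γ))
    (hK : K = ((m : ℝ) / (1 - α)) * Real.log (c * H / ε)) :
    K ^ n * α ^ K ≤
      ((m : ℝ) * n / ((1 - α) * Real.exp 1)) ^ n * (ε / (c * H)) ^ (m - 1) := by
  have hγ' : (0:ℝ) < 1 - γ := by linarith
  have hα' : (0:ℝ) < 1 - α := by linarith
  have hH1 : 1 ≤ H := by
    rw [hH]
    rw [le_div_iff₀ hγ']
    linarith
  have hH0 : 0 < H := lt_of_lt_of_le one_pos hH1
  have hcH : 1 ≤ c * H := by nlinarith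
  have hcH0 : 0 < c * H := by linarith
  set A : ℝ := c * H / ε with hA
  have hA1 : 1 ≤ A := by
    rw [hA, le_div_iff₀ hε0]
    nlinarith
  have hA0 : 0 < A := lt_of_lt_of_le one_pos hA1
  set t : ℝ := Real.log A with htdef
  have ht : 0 ≤ t := Real.log_nonneg hA1
  have hm' : (1:ℝ) ≤ (m:ℝ) := by exact_mod_cast hm
  set C : ℝ := (m:ℝ) / (1 - α) with hC
  have hC0 : 0 < C := by positivity
  have hKt : K = C * t := hK
  have hK0 : 0 ≤ K := by rw [hKt]; positivity
  -- Step 1: α^K ≤ exp(-(1-α)*K)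
  have step1 : α ^ K ≤ Real.exp (-(1 - α) * K) := by
    rcases eq_or_lt_of_le hα0 with h0 | h0
    · rcases eq_or_lt_of_le hK0 with hK00 | hK00
      · rw [← h0, ← hK00, Real.rpow_zero]
        simp
      · rw [← h0, Real.zero_rpow (ne_of_gt hK00)]
        exact le_of_lt (Real.exp_pos _)
    · rw [Real.rpow_def_of_pos h0]
      apply Real.exp_le_exp.mpr
      have hlogα : Real.log α ≤ α - 1 := Real.log_le_sub_one_of_pos h0
      nlinarith [hK0, hlogα]
  -- Step 2: (1-α)*K = m*t
  have step2 : -(1 - α) * K = -((m:ℝ) * t) := by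
    rw [hKt, hC]
    field_simp
  -- Step 3: exp(-(m*t)) = exp(-t) * (ε/(c*H))^(m-1)
  have hexp_t : Real.exp (-t) = ε / (c * H) := by
    rw [htdef, Real.exp_neg, Real.exp_log hA0, hA]
    rw [inv_div]
  have hmcast : ((m - 1 : ℕ) : ℝ) = (m:ℝ) - 1 := by
    rw [Nat.cast_sub hm]; norm_num
  have step3 : Real.exp (-((m:ℝ) * t)) = Real.exp (-t) * (ε / (c * H)) ^ (m - 1) := by
    have : -((m:ℝ) * t) = -t + ((m - 1 : ℕ) : ℝ) * (-t) := by
      rw [hmcast]; ring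
    rw [this, Real.exp_add, Real.exp_nat_mul, hexp_t]
  -- Step 4: K^n = C^n * t^n
  have step4 : K ^ n = C ^ n * t ^ n := by
    rw [hKt, Real.mul_rpow (le_of_lt hC0) ht]
  -- Step 5: RHS factorization
  have step5 : ((m : ℝ) * n / ((1 - α) * Real.exp 1)) ^ n
      = C ^ n * (n / Real.exp 1) ^ n := by
    rw [← Real.mul_rpow (le_of_lt hC0) (by positivity : (0:ℝ) ≤ n / Real.exp 1)]
    congr 1
    rw [hC]
    field_simp
  -- combine
  calc K ^ n * α ^ K ≤ K ^ n * Real.exp (-(1 - α) * K) := by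
        apply mul_le_mul_of_nonneg_left step1 (Real.rpow_nonneg hK0 n)
    _ = C ^ n * (t ^ n * Real.exp (-t)) * (ε / (c * H)) ^ (m - 1) := by
        rw [step2, step3, step4]; ring
    _ ≤ C ^ n * (n / Real.exp 1) ^ n * (ε / (c * H)) ^ (m - 1) := by
        apply mul_le_mul_of_nonneg_right _ (by positivity)
        exact mul_le_mul_of_nonneg_left (aux_pow_exp_le t n ht hn)
          (Real.rpow_nonneg (le_of_lt hC0) n)
    _ = ((m : ℝ) * n / ((1 - α) * Real.exp 1)) ^ n * (ε / (c * H)) ^ (m - 1) := by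
        rw [step5]
end
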